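/- Let n ≥ 3 and suppose a_n ≥ 2. Then the a_n − 1 numbers q_{n-2} + j·q_{n-1}, for j = 1, 2, …, a_n − 1, are a_n − 1 successive elements of 𝔛(α). -/

import Mathlib

open Filter Real Set

/-- Iterates of the Gauss map starting from `α`: `x₀ = α`, `x_{n+1} = 1 / fract (xₙ)`. -/
noncomputable def gaussIter (α : ℝ) : ℕ → ℝ
  | 0 => α
  | n + 1 => (Int.fract (gaussIter α n))⁻¹

/-- Partial quotients of the continued fraction `α = [a₀; a₁, a₂, …]`. -/
noncomputable def cfA (α : ℝ) (n : ℕ) : ℤ := ⌊gaussIter α n⌋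

/-- Denominators of convergents, with shifted index: `cfQ α 0 = q₋₁ = 0`,
`cfQ α 1 = q₀ = 1`, and `cfQ α (n+1) = qₙ` where `qₙ = aₙ q_{n-1} + q_{n-2}`. -/
noncomputable def cfQ (α : ℝ) : ℕ → ℤ
  | 0 => 0
  | 1 => 1
  | n + 2 => cfA α (n + 1) * cfQ α (n + 1) + cfQ α n

/-- Numerators of convergents, with shifted index: `cfP α 0 = p₋₁ = 1`,
`cfP α 1 = p₀ = ⌊α⌋`, and `cfP α (n+1) = pₙ` where `pₙ = aₙ p_{n-1} + p_{n-2}`. -/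
noncomputable def cfP (α : ℝ) : ℕ → ℤ
  | 0 => 1
  | 1 => ⌊α⌋
  | n + 2 => cfA α (n + 1) * cfP α (n + 1) + cfP α n

/-- `qₙ`, the denominator of the `n`-th convergent of `α`. -/
noncomputable def cfDen (α : ℝ) (n : ℕ) : ℤ := cfQ α (n + 1)

/-- `pₙ`, the numerator of the `n`-th convergent of `α`. -/
noncomputable def cfNum (α : ℝ) (n : ℕ) : ℤ := cfP α (n + 1)

/-- `ξₙ = |qₙ α − pₙ|`. -/
noncomputable def cfXi (α : ℝ) (n : ℕ) : ℝ := |(cfDen α n : ℝ) * α - (cfNum α n : ℝ)|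

/-- `ψ_α(t) = min { ‖qα‖ : q ∈ ℤ, 1 ≤ q ≤ t }`. -/
noncomputable def psiFn (α t : ℝ) : ℝ :=
  sInf {x : ℝ | ∃ p q : ℤ, 1 ≤ q ∧ (q : ℝ) ≤ t ∧ x = |(q : ℝ) * α - (p : ℝ)|}

/-- `ψ_α^[2](t)`: the same minimum but over pairs `(p,q)` that are not `(pₙ,qₙ)` for any `n ≥ 0`. -/
noncomputable def psi2Fn (α t : ℝ) : ℝ :=
  sInf {x : ℝ | ∃ p q : ℤ, 1 ≤ q ∧ (q : ℝ) ≤ t ∧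
    (∀ n : ℕ, ¬(p = cfNum α n ∧ q = cfDen α n)) ∧ x = |(q : ℝ) * α - (p : ℝ)|}

/-- `ψ_α^[2]*(t)`: the same minimum but over pairs `(p,q)` with `p/q ≠ pₙ/qₙ` for all `n ≥ 0`. -/
noncomputable def psi2sFn (α t : ℝ) : ℝ :=
  sInf {x : ℝ | ∃ p q : ℤ, 1 ≤ q ∧ (q : ℝ) ≤ t ∧
    (∀ n : ℕ, (p : ℝ) / (q : ℝ) ≠ (cfNum α n : ℝ) / (cfDen α n : ℝ)) ∧
    x = |(q : ℝ) * α - (p : ℝ)|}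

/-- `λ(α) = liminf_{t→∞} t · ψ_α(t)`. -/
noncomputable def lamOf (α : ℝ) : ℝ := Filter.liminf (fun t : ℝ => t * psiFn α t) Filter.atTop

/-- `𝔨(α) = liminf_{t→∞} t · ψ_α^[2](t)`. -/
noncomputable def kOf (α : ℝ) : ℝ := Filter.liminf (fun t : ℝ => t * psi2Fn α t) Filter.atTop

/-- `𝔨*(α) = liminf_{t→∞} t · ψ_α^[2]*(t)`. -/
noncomputable def ksOf (α : ℝ) : ℝ := Filter.liminf (fun t : ℝ => t * psi2sFn α t) Filter.atTop

/-- `α` and `β` are equivalent: `β = (aα+b)/(cα+d)` with `a,b,c,d ∈ ℤ`, `|ad − bc| = 1`. -/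
def CFEquiv (α β : ℝ) : Prop :=
  ∃ a b c d : ℤ, |a * d - b * c| = 1 ∧ β = ((a : ℝ) * α + (b : ℝ)) / ((c : ℝ) * α + (d : ℝ))

/-- The spectrum `𝕃₂ = {𝔨(α) : α irrational}`. -/
def L2 : Set ℝ := {x : ℝ | ∃ α : ℝ, Irrational α ∧ kOf α = x}

/-- The spectrum `𝕃₂* = {𝔨*(α) : α irrational}`. -/
def L2s : Set ℝ := {x : ℝ | ∃ α : ℝ, Irrational α ∧ ksOf α = x}

/-- `𝔔(α)`: the set of positive integers at which `ψ_α^[2]` is discontinuous. -/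
def QSet (α : ℝ) : Set ℤ := {m : ℤ | 0 < m ∧ ¬ ContinuousAt (psi2Fn α) (m : ℝ)}

/-- `𝔛(α)`: the set of positive integers at which `ψ_α^[2]*` is discontinuous. -/
def XSet (α : ℝ) : Set ℤ := {m : ℤ | 0 < m ∧ ¬ ContinuousAt (psi2sFn α) (m : ℝ)}

/-- The members of the list `l` are successive elements of `S`: they belong to `S`,
are listed in increasing order, and no element of `S` lies strictly between
consecutive listed ones. -/
def SuccessiveIn (S : Set ℤ) (l : List ℤ) : Prop :=
  (∀ x ∈ l, x ∈ S) ∧ l.Chain' (fun x y => x < y ∧ ∀ z ∈ S, ¬(x < z ∧ z < y))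

/-- `κ¹ₙ = (q_{n-2} + q_{n-1})(ξ_{n-2} − ξ_{n-1})`. -/
noncomputable def kap1 (α : ℝ) (n : ℕ) : ℝ :=
  ((cfDen α (n - 2) + cfDen α (n - 1) : ℤ) : ℝ) * (cfXi α (n - 2) - cfXi α (n - 1))

/-- `κ²ₙ = (qₙ − q_{n-1})(ξ_{n-1} + ξₙ)`. -/
noncomputable def kap2 (α : ℝ) (n : ℕ) : ℝ :=
  ((cfDen α n - cfDen α (n - 1) : ℤ) : ℝ) * (cfXi α (n - 1) + cfXi α n)

/-- `κ³ₙ = (2q_{n-2} + q_{n-1})(2ξ_{n-2} − ξ_{n-1})`. -/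
noncomputable def kap3 (α : ℝ) (n : ℕ) : ℝ :=
  ((2 * cfDen α (n - 2) + cfDen α (n - 1) : ℤ) : ℝ) * (2 * cfXi α (n - 2) - cfXi α (n - 1))

/-- `κ⁴ₙ = 4 q_{n-1} ξ_{n-1}`. -/
noncomputable def kap4 (α : ℝ) (n : ℕ) : ℝ :=
  ((4 * cfDen α (n - 1) : ℤ) : ℝ) * cfXi α (n - 1)

/-!
Write `δₖ = qₖ α − pₖ`, so that `ξₖ = |δₖ|`, and put `n = k + 2`. The errors `δₖ` alternate in
sign, and `ξₖ = a_{k+2} ξ_{k+1} + ξ_{k+2}`. Every `(p, q)` is an integer combination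
`x (p_{k+1}, q_{k+1}) + y (p_k, q_k)`, hence `|qα − p| = |x ξ_{k+1} − y ξ_k|`; if
`q < q_k + (j + 1) q_{k+1}` and `p/q ≠ p_{k+1}/q_{k+1}` (so `y ≠ 0`), this is at least
`ξ_k − j ξ_{k+1}`. For `1 ≤ j < a_{k+2}` the intermediate fraction
`(p_k + j p_{k+1}) / (q_k + j q_{k+1})` is reduced, is not a convergent, and attains this bound.
So `ψ_α^[2]*` equals `ξ_k − j ξ_{k+1}` on `[q_k + j q_{k+1}, q_k + (j + 1) q_{k+1})`, and it
drops by `ξ_{k+1} > 0` at each left endpoint.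
-/

open Topology

lemma eq_of_div_eq_div_of_isCoprime {a b c d : ℤ} (hb : 0 < b) (hd : 0 < d)
    (hab : IsCoprime a b) (hcd : IsCoprime c d) (h : (a : ℝ) / b = c / d) : b = d := by
  have hq : ((a / b : ℚ) : ℝ) = ((c / d : ℚ) : ℝ) := by push_cast; exact h
  exact (Rat.div_int_inj hb hd (Int.isCoprime_iff_gcd_eq_one.1 hab)
    (Int.isCoprime_iff_gcd_eq_one.1 hcd) (Rat.cast_injective hq)).2

lemma abs_mul_add_mul_of_mul_neg {u v : ℝ} (huv : u * v < 0) (x y : ℝ) :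
    |x * u + y * v| = |(x * |u| - y * |v|)| := by
  rcases lt_or_gt_of_ne (left_ne_zero_of_mul huv.ne) with hu | hu
  · rw [abs_of_neg hu, abs_of_pos (pos_of_mul_neg_right huv hu.le), ← abs_neg]
    congr 1
    ring
  · rw [abs_of_pos hu, abs_of_neg (neg_of_mul_neg_right huv hu.le)]
    congr 1
    ring

lemma sub_mul_le_abs_mul_sub_mul {A B : ℝ} {x y Q Q' : ℤ} {j : ℕ} (hA : 0 < A)
    (hAB : (j + 1) * A ≤ B) (hQ : 0 ≤ Q) (hQ' : 0 < Q') (hq : 0 < x * Q' + y * Q)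
    (hqlt : x * Q' + y * Q < Q + (j + 1) * Q') (hy : y ≠ 0) :
    B - j * A ≤ |x * A - y * B| := by
  have hB : 0 < B := by nlinarith [(Nat.cast_nonneg j : (0 : ℝ) ≤ j)]
  -- `y < 0` forces `x > 0`, while `y > 0` forces `x ≤ j`.
  rcases hy.lt_or_gt with hy | hy
  · have hx : 0 < x := pos_of_mul_pos_left (by nlinarith) hQ'.le
    have hxR : (1 : ℝ) ≤ x := by exact_mod_cast hx
    have hyR : (y : ℝ) ≤ -1 := by exact_mod_cast (show y ≤ -1 by omega)
    calc B - j * A ≤ x * A - y * B := by nlinarith [(Nat.cast_nonneg j : (0 : ℝ) ≤ j)]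
      _ ≤ |x * A - y * B| := le_abs_self _
  · have hxj : x ≤ j := by
      have : x * Q' < (j + 1) * Q' := by nlinarith
      have := lt_of_mul_lt_mul_right this hQ'.le
      omega
    have hxR : (x : ℝ) ≤ j := by exact_mod_cast hxj
    have hyR : (1 : ℝ) ≤ y := by exact_mod_cast hy
    calc B - j * A ≤ y * B - x * A := by nlinarith
      _ ≤ |x * A - y * B| := by rw [abs_sub_comm]; exact le_abs_self _

lemma not_continuousAt_of_lt_of_eventually_le {X Y : Type*} [TopologicalSpace X]
    [TopologicalSpace Y] [Preorder Y] [ClosedIciTopology Y] {f : X → Y} {x : X} {s : Set X}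
    [(𝓝[s] x).NeBot] {c : Y} (hfx : f x < c) (h : ∀ᶠ y in 𝓝[s] x, c ≤ f y) :
    ¬ContinuousAt f x :=
  fun hf => hfx.not_ge (ge_of_tendsto (hf.tendsto.mono_left nhdsWithin_le_nhds) h)

lemma successiveIn_map_range {S : Set ℤ} {f : ℕ → ℤ} {K : ℕ} (hmem : ∀ i < K, f i ∈ S)
    (hgap : ∀ i, i + 1 < K → f i < f (i + 1) ∧ ∀ z ∈ S, ¬(f i < z ∧ z < f (i + 1))) :
    SuccessiveIn S ((List.range K).map f) := by
  refine ⟨by simpa using hmem, ?_⟩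
  rw [List.Chain', List.isChain_map, List.isChain_range]
  exact fun i hi => hgap i (by omega)

section

variable {α : ℝ}

lemma irrational_gaussIter (hα : Irrational α) : ∀ k, Irrational (gaussIter α k)
  | 0 => hα
  | k + 1 => by
    rw [gaussIter, ← Int.self_sub_floor]
    exact ((irrational_gaussIter hα k).sub_intCast _).inv

lemma fract_gaussIter_pos (hα : Irrational α) (k : ℕ) : 0 < Int.fract (gaussIter α k) :=
  Int.fract_pos.2 ((irrational_gaussIter hα k).ne_int _)

lemma gaussIter_succ_mul_fract (hα : Irrational α) (k : ℕ) :
    gaussIter α (k + 1) * Int.fract (gaussIter α k) = 1 :=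
  inv_mul_cancel₀ (fract_gaussIter_pos hα k).ne'

lemma one_le_cfA (hα : Irrational α) (k : ℕ) : 1 ≤ cfA α (k + 1) := by
  refine Int.le_floor.2 ?_
  rw [Int.cast_one]
  exact (one_le_inv₀ (fract_gaussIter_pos hα k)).2 (Int.fract_lt_one _).le

lemma cfDen_add_two (α : ℝ) (k : ℕ) :
    cfDen α (k + 2) = cfA α (k + 2) * cfDen α (k + 1) + cfDen α k := rfl

lemma cfNum_add_two (α : ℝ) (k : ℕ) :
    cfNum α (k + 2) = cfA α (k + 2) * cfNum α (k + 1) + cfNum α k := rfl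

lemma one_le_cfDen (hα : Irrational α) : ∀ k, 1 ≤ cfDen α k
  | 0 => le_rfl
  | 1 => by simpa [cfDen, cfQ] using one_le_cfA hα 0
  | k + 2 => by
    rw [cfDen_add_two]
    nlinarith [one_le_cfDen hα k, one_le_cfDen hα (k + 1), one_le_cfA hα (k + 1)]

lemma cfDen_mono (hα : Irrational α) : Monotone (cfDen α) := by
  refine monotone_nat_of_le_succ fun k => ?_
  cases k with
  | zero => exact one_le_cfDen hα 1
  | succ k =>
    rw [cfDen_add_two]
    nlinarith [one_le_cfDen hα k, one_le_cfDen hα (k + 1), one_le_cfA hα (k + 1)]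

lemma cfNum_mul_cfDen_sub (α : ℝ) :
    ∀ k, cfNum α (k + 1) * cfDen α k - cfNum α k * cfDen α (k + 1) = (-1) ^ k
  | 0 => by simp [cfNum, cfDen, cfP, cfQ]; ring
  | k + 1 => by
    rw [cfNum_add_two, cfDen_add_two, pow_succ, ← cfNum_mul_cfDen_sub α k]
    ring

lemma exists_cfNum_cfDen_combination (α : ℝ) (k : ℕ) (p q : ℤ) :
    ∃ x y : ℤ, p = x * cfNum α (k + 1) + y * cfNum α k ∧
      q = x * cfDen α (k + 1) + y * cfDen α k := by
  have hdet := cfNum_mul_cfDen_sub α k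
  have hsq : ((-1 : ℤ) ^ k) * (-1) ^ k = 1 := by rw [← mul_pow]; norm_num
  refine ⟨(-1) ^ k * (p * cfDen α k - q * cfNum α k),
    (-1) ^ k * (q * cfNum α (k + 1) - p * cfDen α (k + 1)), ?_, ?_⟩
  · linear_combination -p * hsq - (-1) ^ k * p * hdet
  · linear_combination -q * hsq - (-1) ^ k * q * hdet

noncomputable def cfSemiDen (α : ℝ) (k j : ℕ) : ℤ := cfDen α k + j * cfDen α (k + 1)

noncomputable def cfSemiNum (α : ℝ) (k j : ℕ) : ℤ := cfNum α k + j * cfNum α (k + 1)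

lemma cfSemiDen_succ (α : ℝ) (k j : ℕ) :
    cfSemiDen α k (j + 1) = cfSemiDen α k j + cfDen α (k + 1) := by
  simp only [cfSemiDen]
  push_cast
  ring

lemma one_le_cfSemiDen (hα : Irrational α) (k j : ℕ) : 1 ≤ cfSemiDen α k j := by
  have := one_le_cfDen hα (k + 1)
  have := one_le_cfDen hα k
  have : 0 ≤ (j : ℤ) * cfDen α (k + 1) := by positivity
  simp only [cfSemiDen]
  linarith

lemma cfSemiDen_lt_succ (hα : Irrational α) (k j : ℕ) :
    cfSemiDen α k j < cfSemiDen α k (j + 1) := by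
  linarith [cfSemiDen_succ α k j, one_le_cfDen hα (k + 1)]

lemma isCoprime_cfSemiNum_cfSemiDen (α : ℝ) (k j : ℕ) :
    IsCoprime (cfSemiNum α k j) (cfSemiDen α k j) := by
  have hdet := cfNum_mul_cfDen_sub α k
  have hsq : ((-1 : ℤ) ^ k) * (-1) ^ k = 1 := by rw [← mul_pow]; norm_num
  refine ⟨-(-1) ^ k * cfDen α (k + 1), (-1) ^ k * cfNum α (k + 1), ?_⟩
  simp only [cfSemiNum, cfSemiDen]
  linear_combination (-1) ^ k * hdet + hsq

lemma isCoprime_cfNum_cfDen (α : ℝ) (k : ℕ) : IsCoprime (cfNum α k) (cfDen α k) := by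
  simpa [cfSemiNum, cfSemiDen] using isCoprime_cfSemiNum_cfSemiDen α k 0

lemma cfDen_add_one_lt_cfSemiDen (hα : Irrational α) {k j : ℕ} (hj : 1 ≤ j) :
    cfDen α (k + 1) < cfSemiDen α k j := by
  have := one_le_cfDen hα k
  have := one_le_cfDen hα (k + 1)
  simp only [cfSemiDen]
  nlinarith [(Int.ofNat_le.2 hj : ((1 : ℕ) : ℤ) ≤ j)]

lemma cfSemiDen_lt_cfDen_add_two (hα : Irrational α) {k j : ℕ} (hj : (j : ℤ) < cfA α (k + 2)) :
    cfSemiDen α k j < cfDen α (k + 2) := by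
  have := one_le_cfDen hα (k + 1)
  rw [cfSemiDen, cfDen_add_two]
  nlinarith

lemma cfSemiNum_div_ne (hα : Irrational α) {k j : ℕ} (hj1 : 1 ≤ j)
    (hj : (j : ℤ) < cfA α (k + 2)) (i : ℕ) :
    (cfSemiNum α k j : ℝ) / cfSemiDen α k j ≠ cfNum α i / cfDen α i := by
  intro h
  have hden := eq_of_div_eq_div_of_isCoprime (one_le_cfSemiDen hα k j) (one_le_cfDen hα i)
    (isCoprime_cfSemiNum_cfSemiDen α k j) (isCoprime_cfNum_cfDen α i) h
  have hlo := cfDen_add_one_lt_cfSemiDen hα (k := k) hj1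
  have hhi := cfSemiDen_lt_cfDen_add_two hα hj
  rcases le_or_gt i (k + 1) with hi | hi
  · exact absurd (cfDen_mono hα hi) (by omega)
  · exact absurd (cfDen_mono hα (show k + 2 ≤ i by omega)) (by omega)

noncomputable def cfErr (α : ℝ) (k : ℕ) : ℝ := cfDen α k * α - cfNum α k

lemma abs_cfErr (α : ℝ) (k : ℕ) : |cfErr α k| = cfXi α k := rfl

lemma cfErr_zero (α : ℝ) : cfErr α 0 = Int.fract α := by
  rw [← Int.self_sub_floor]
  simp [cfErr, cfDen, cfNum, cfQ, cfP]

lemma cfErr_succ (hα : Irrational α) :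
    ∀ k, cfErr α (k + 1) = -cfErr α k * Int.fract (gaussIter α (k + 1))
  | 0 => by
    have hx := gaussIter_succ_mul_fract hα 0
    simp only [cfErr, cfDen, cfNum, cfQ, cfP, cfA, gaussIter, Int.fract] at hx ⊢
    push_cast
    linear_combination hx
  | k + 1 => by
    have ih := cfErr_succ hα k
    have hx := gaussIter_succ_mul_fract hα (k + 1)
    have hfract : Int.fract (gaussIter α (k + 2)) = gaussIter α (k + 2) - cfA α (k + 2) := rfl
    have hrec : cfErr α (k + 2) = cfA α (k + 2) * cfErr α (k + 1) + cfErr α k := by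
      simp only [cfErr, cfDen_add_two, cfNum_add_two]
      push_cast
      ring
    rw [hrec, hfract]
    linear_combination gaussIter α (k + 2) * ih - cfErr α k * hx

lemma cfErr_ne_zero (hα : Irrational α) : ∀ k, cfErr α k ≠ 0
  | 0 => by rw [cfErr_zero]; exact (fract_gaussIter_pos hα 0).ne'
  | k + 1 => by
    rw [cfErr_succ hα]
    exact mul_ne_zero (neg_ne_zero.2 (cfErr_ne_zero hα k)) (fract_gaussIter_pos hα _).ne'

lemma cfErr_mul_succ_neg (hα : Irrational α) (k : ℕ) : cfErr α k * cfErr α (k + 1) < 0 := by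
  rw [cfErr_succ hα]
  nlinarith [mul_pos (mul_self_pos.2 (cfErr_ne_zero hα k)) (fract_gaussIter_pos hα (k + 1))]

lemma cfXi_pos (hα : Irrational α) (k : ℕ) : 0 < cfXi α k := abs_pos.2 (cfErr_ne_zero hα k)

lemma cfXi_succ (hα : Irrational α) (k : ℕ) :
    cfXi α (k + 1) = cfXi α k * Int.fract (gaussIter α (k + 1)) := by
  rw [← abs_cfErr, cfErr_succ hα, abs_mul, abs_neg, abs_of_pos (fract_gaussIter_pos hα _),
    abs_cfErr]

lemma cfXi_lt_one (hα : Irrational α) : ∀ k, cfXi α k < 1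
  | 0 => by
    rw [← abs_cfErr, cfErr_zero, abs_of_nonneg (Int.fract_nonneg _)]
    exact Int.fract_lt_one _
  | k + 1 => by
    rw [cfXi_succ hα]
    have := cfXi_lt_one hα k
    nlinarith [cfXi_pos hα k, fract_gaussIter_pos hα (k + 1),
      Int.fract_lt_one (gaussIter α (k + 1))]

lemma cfXi_eq_cfA_mul_add (hα : Irrational α) (k : ℕ) :
    cfXi α k = cfA α (k + 2) * cfXi α (k + 1) + cfXi α (k + 2) := by
  have hx := gaussIter_succ_mul_fract hα (k + 1)
  have hfract : Int.fract (gaussIter α (k + 2)) = gaussIter α (k + 2) - cfA α (k + 2) := rfl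
  rw [cfXi_succ hα (k + 1), cfXi_succ hα k, hfract]
  linear_combination -cfXi α k * hx

lemma cfA_mul_cfXi_lt (hα : Irrational α) (k : ℕ) :
    cfA α (k + 2) * cfXi α (k + 1) < cfXi α k := by
  linarith [cfXi_eq_cfA_mul_add hα k, cfXi_pos hα (k + 2)]

lemma cfXi_sub_le_abs (hα : Irrational α) {k j : ℕ} (hj : (j : ℤ) < cfA α (k + 2)) {p q : ℤ}
    (hq : 0 < q) (hqlt : q < cfSemiDen α k (j + 1))
    (hpq : (p : ℝ) / q ≠ cfNum α (k + 1) / cfDen α (k + 1)) :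
    cfXi α k - j * cfXi α (k + 1) ≤ |q * α - p| := by
  obtain ⟨x, y, rfl, rfl⟩ := exists_cfNum_cfDen_combination α k p q
  have hy : y ≠ 0 := by
    rintro rfl
    have hx : x ≠ 0 := by rintro rfl; simp at hq
    apply hpq
    push_cast
    simp only [zero_mul, add_zero]
    exact mul_div_mul_left _ _ (Int.cast_ne_zero.2 hx)
  have hAB : (j + 1) * cfXi α (k + 1) ≤ cfXi α k := by
    have : (j + 1 : ℝ) ≤ cfA α (k + 2) := by exact_mod_cast hj
    nlinarith [cfA_mul_cfXi_lt hα k, cfXi_pos hα (k + 1)]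
  have herr : ((x * cfDen α (k + 1) + y * cfDen α k : ℤ) : ℝ) * α
      - ((x * cfNum α (k + 1) + y * cfNum α k : ℤ) : ℝ) = x * cfErr α (k + 1) + y * cfErr α k := by
    simp only [cfErr]
    push_cast
    ring
  rw [herr, abs_mul_add_mul_of_mul_neg (by linarith [cfErr_mul_succ_neg hα k]), abs_cfErr,
    abs_cfErr]
  refine sub_mul_le_abs_mul_sub_mul (cfXi_pos hα _) hAB (by linarith [one_le_cfDen hα k])
    (one_le_cfDen hα (k + 1)) hq ?_ hy
  rw [cfSemiDen_succ, cfSemiDen] at hqlt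
  linarith

lemma abs_cfSemiDen_mul_sub_cfSemiNum (hα : Irrational α) {k j : ℕ} (hj : (j : ℤ) < cfA α (k + 2)) :
    |(cfSemiDen α k j : ℝ) * α - cfSemiNum α k j| = cfXi α k - j * cfXi α (k + 1) := by
  have herr : (cfSemiDen α k j : ℝ) * α - cfSemiNum α k j =
      1 * cfErr α k + j * cfErr α (k + 1) := by
    simp only [cfSemiDen, cfSemiNum, cfErr]
    push_cast
    ring
  have hjle : j * cfXi α (k + 1) ≤ cfXi α k := by
    have : (j : ℝ) ≤ cfA α (k + 2) := by exact_mod_cast hj.le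
    nlinarith [cfA_mul_cfXi_lt hα k, cfXi_pos hα (k + 1)]
  rw [herr, abs_mul_add_mul_of_mul_neg (cfErr_mul_succ_neg hα k), abs_cfErr, abs_cfErr, one_mul,
    abs_of_nonneg (sub_nonneg.2 hjle)]

lemma floor_sub_one_div_ne (hα : Irrational α) (i : ℕ) :
    ((⌊α⌋ - 1 : ℤ) : ℝ) / ((1 : ℤ) : ℝ) ≠ cfNum α i / cfDen α i := by
  intro h
  have hq : (1 : ℝ) ≤ cfDen α i := by exact_mod_cast one_le_cfDen hα i
  rw [Int.cast_one, div_one, eq_div_iff (by positivity)] at h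
  have hxi : cfXi α i = cfDen α i * (α - ⌊α⌋ + 1) := by
    rw [← abs_cfErr, cfErr, ← h, abs_of_nonneg] <;> push_cast <;>
      nlinarith [Int.floor_le α]
  nlinarith [cfXi_lt_one hα i, Int.floor_le α]

lemma psi2sFn_le (t : ℝ) {p q : ℤ} (hq : 1 ≤ q) (hqt : (q : ℝ) ≤ t)
    (hpq : ∀ i, (p : ℝ) / q ≠ cfNum α i / cfDen α i) : psi2sFn α t ≤ |q * α - p| :=
  csInf_le ⟨0, by rintro _ ⟨_, _, _, _, _, rfl⟩; exact abs_nonneg _⟩ ⟨p, q, hq, hqt, hpq, rfl⟩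

lemma le_psi2sFn (hα : Irrational α) {t c : ℝ} (ht : 1 ≤ t)
    (h : ∀ p q : ℤ, 1 ≤ q → (q : ℝ) ≤ t → (∀ i, (p : ℝ) / q ≠ cfNum α i / cfDen α i) →
      c ≤ |q * α - p|) :
    c ≤ psi2sFn α t := by
  -- The witness `(⌊α⌋ - 1) / 1` keeps the set nonempty, so its `sInf` is not the junk value `0`.
  refine le_csInf ⟨_, ⌊α⌋ - 1, 1, le_rfl, by exact_mod_cast ht, floor_sub_one_div_ne hα, rfl⟩ ?_
  rintro _ ⟨p, q, hq, hqt, hpq, rfl⟩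
  exact h p q hq hqt hpq

lemma cfXi_sub_le_psi2sFn (hα : Irrational α) {k j : ℕ} (hj : (j : ℤ) < cfA α (k + 2)) {t : ℝ}
    (ht : 1 ≤ t) (ht' : t < cfSemiDen α k (j + 1)) :
    cfXi α k - j * cfXi α (k + 1) ≤ psi2sFn α t :=
  le_psi2sFn hα ht fun _ _ hq hqt hpq =>
    cfXi_sub_le_abs hα hj hq (by exact_mod_cast hqt.trans_lt ht') (hpq (k + 1))

lemma psi2sFn_eq (hα : Irrational α) {k j : ℕ} (hj1 : 1 ≤ j) (hj : (j : ℤ) < cfA α (k + 2))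
    {t : ℝ} (ht : (cfSemiDen α k j : ℝ) ≤ t) (ht' : t < cfSemiDen α k (j + 1)) :
    psi2sFn α t = cfXi α k - j * cfXi α (k + 1) := by
  have h1 : (1 : ℝ) ≤ cfSemiDen α k j := by exact_mod_cast one_le_cfSemiDen hα k j
  refine le_antisymm ?_ (cfXi_sub_le_psi2sFn hα hj (h1.trans ht) ht')
  rw [← abs_cfSemiDen_mul_sub_cfSemiNum hα hj]
  exact psi2sFn_le t (one_le_cfSemiDen hα k j) ht (cfSemiNum_div_ne hα hj1 hj)

lemma continuousAt_psi2sFn (hα : Irrational α) {k j : ℕ} (hj1 : 1 ≤ j)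
    (hj : (j : ℤ) < cfA α (k + 2)) {t : ℝ} (ht : (cfSemiDen α k j : ℝ) < t)
    (ht' : t < cfSemiDen α k (j + 1)) :
    ContinuousAt (psi2sFn α) t := by
  refine Filter.EventuallyEq.continuousAt (y := cfXi α k - j * cfXi α (k + 1)) ?_
  filter_upwards [Ioo_mem_nhds ht ht'] with s hs
  exact psi2sFn_eq hα hj1 hj hs.1.le hs.2

lemma cfSemiDen_mem_XSet (hα : Irrational α) {k j : ℕ} (hj1 : 1 ≤ j)
    (hj : (j : ℤ) < cfA α (k + 2)) : cfSemiDen α k j ∈ XSet α := by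
  obtain ⟨i, rfl⟩ : ∃ i, j = i + 1 := ⟨j - 1, by omega⟩
  have hQ : (2 : ℝ) ≤ cfSemiDen α k (i + 1) := by
    have := one_le_cfSemiDen hα k i
    have := one_le_cfDen hα (k + 1)
    exact_mod_cast (show (2 : ℤ) ≤ _ by rw [cfSemiDen_succ]; omega)
  refine ⟨zero_lt_one.trans_le (one_le_cfSemiDen hα k _), ?_⟩
  refine not_continuousAt_of_lt_of_eventually_le (s := Iio (cfSemiDen α k (i + 1) : ℝ))
    (c := cfXi α k - i * cfXi α (k + 1)) ?_ ?_
  · rw [psi2sFn_eq hα hj1 hj le_rfl (by exact_mod_cast cfSemiDen_lt_succ hα k (i + 1))]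
    push_cast
    linarith [cfXi_pos hα (k + 1)]
  · filter_upwards [Ioo_mem_nhdsLT (sub_one_lt (cfSemiDen α k (i + 1) : ℝ))] with t ht
    exact cfXi_sub_le_psi2sFn hα (by omega) (by linarith [ht.1]) ht.2
end

theorem stmt16_general (α : ℝ) (hα : Irrational α)
    (n : ℕ) (hn : 3 ≤ n) :
    SuccessiveIn (XSet α)
      ((List.range ((cfA α n).toNat - 1)).map
        (fun j => cfDen α (n - 2) + ((j : ℤ) + 1) * cfDen α (n - 1))) := by
  obtain ⟨k, rfl⟩ : ∃ k, n = k + 2 := ⟨n - 2, by omega⟩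
  have hterm : (fun j : ℤ => cfDen α (k + 2 - 2) + (j + 1) * cfDen α (k + 2 - 1)) ∘ (↑) =
      fun i : ℕ => cfSemiDen α k (i + 1) := by
    funext i
    simp [cfSemiDen]
  -- The list in the statement is elaborated through the monadic coercion `List ℕ → List ℤ`.
  simp only [List.pure_def, List.bind_eq_flatMap, ← List.map_eq_flatMap, List.map_map, hterm]
  refine successiveIn_map_range (fun i hi => cfSemiDen_mem_XSet hα (by omega) (by omega))
    fun i hi => ⟨cfSemiDen_lt_succ hα k (i + 1), fun z hz hbetween => hz.2 ?_⟩
  exact continuousAt_psi2sFn hα (k := k) (j := i + 1) (by omega) (by omega)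
    (by exact_mod_cast hbetween.1) (by exact_mod_cast hbetween.2)

/-- Let `α ∈ (0,1)` be irrational, `n ≥ 3` and `aₙ ≥ 2`. Then the
`aₙ − 1` numbers `q_{n-2} + j·q_{n-1}`, `j = 1, …, aₙ − 1`, are `aₙ − 1` successive
elements of `𝔛(α)`. -/
theorem stmt16 (α : ℝ) (hα : Irrational α) (h0 : 0 < α) (h1 : α < 1)
    (n : ℕ) (hn : 3 ≤ n) (ha : 2 ≤ cfA α n) :
    SuccessiveIn (XSet α)
      ((List.range ((cfA α n).toNat - 1)).map
        (fun j => cfDen α (n - 2) + ((j : ℤ) + 1) * cfDen α (n - 1))) :=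
  stmt16_general α hα n hn
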